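/- (Algebraic identity verifying equivalence of Green–Naghdi formulations, non-topographical part) Let d = 2, h : ℝ² → ℝ smooth and positive, u : ℝ² → ℝ² smooth. Then (−1/3)(∇·u/h) ∇(h³∇·u) + (1/h)∇( (−1/3)h³ (∇(∇·u))·u + h³(∇·u)² ) − (1/2)∇((h∇·u)²) = (−1/(3h)) ∇( h³ ( (u·∇)(∇·u) − (∇·u)² ) ). -/

import Mathlib

open MeasureTheory Finset

noncomputable section

/-- Partial derivative in the `i`-th coordinate direction. -/
def pdv {d : ℕ} {F : Type*} [NormedAddCommGroup F] [NormedSpace ℝ F]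
    (i : Fin d) (f : (Fin d → ℝ) → F) (x : Fin d → ℝ) : F :=
  fderiv ℝ f x (Pi.single i 1)

/-- Divergence of a vector field on `ℝ²`. -/
def divg (u : (Fin 2 → ℝ) → (Fin 2 → ℝ)) (x : Fin 2 → ℝ) : ℝ :=
  ∑ i, pdv i (fun y => u y i) x

namespace GNaux

variable {d : ℕ} {f g : (Fin d → ℝ) → ℝ} {x : Fin d → ℝ} {i : Fin d}

lemma pdv_mul (hf : DifferentiableAt ℝ f x) (hg : DifferentiableAt ℝ g x) :
    pdv i (fun y => f y * g y) x = pdv i f x * g x + f x * pdv i g x := by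
  unfold pdv
  rw [fderiv_fun_mul hf hg]
  simp [ContinuousLinearMap.add_apply, ContinuousLinearMap.smul_apply, smul_eq_mul]
  ring

lemma pdv_add (hf : DifferentiableAt ℝ f x) (hg : DifferentiableAt ℝ g x) :
    pdv i (fun y => f y + g y) x = pdv i f x + pdv i g x := by
  unfold pdv
  rw [fderiv_fun_add hf hg]; simp

lemma pdv_sub (hf : DifferentiableAt ℝ f x) (hg : DifferentiableAt ℝ g x) :
    pdv i (fun y => f y - g y) x = pdv i f x - pdv i g x := by
  unfold pdv
  rw [fderiv_fun_sub hf hg]; simp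

lemma pdv_const_mul (hf : DifferentiableAt ℝ f x) (c : ℝ) :
    pdv i (fun y => c * f y) x = c * pdv i f x := by
  unfold pdv
  rw [fderiv_const_mul hf c]; simp

lemma pdv_sq (hf : DifferentiableAt ℝ f x) :
    pdv i (fun y => f y ^ 2) x = 2 * f x * pdv i f x := by
  have e : (fun y => f y ^ 2) = fun y => f y * f y := funext fun y => sq (f y)
  rw [e, pdv_mul hf hf]; ring

lemma pdv_cube (hf : DifferentiableAt ℝ f x) :
    pdv i (fun y => f y ^ 3) x = 3 * f x ^ 2 * pdv i f x := by
  have e : (fun y => f y ^ 3) = fun y => f y ^ 2 * f y :=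
    funext fun y => pow_succ (f y) 2
  rw [e, pdv_mul (hf.fun_pow 2) hf, pdv_sq hf]; ring

lemma contDiff_pdv {f : (Fin d → ℝ) → ℝ} (hf : ContDiff ℝ (⊤ : ℕ∞) f) (j : Fin d) :
    ContDiff ℝ (⊤ : ℕ∞) (pdv j f) :=
  (hf.fderiv_right (by simp)).clm_apply contDiff_const

end GNaux

/-- algebraic identity for the non-topographical Green–Naghdi terms:
for smooth positive `h` and smooth `u` on `ℝ²`,
`(−1/3)(∇·u/h)∇(h³∇·u) + (1/h)∇((−1/3)h³(∇(∇·u))·u + h³(∇·u)²) − (1/2)∇((h∇·u)²)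
  = (−1/(3h))∇(h³((u·∇)(∇·u) − (∇·u)²))` (componentwise, at every point). -/
theorem GN_algebraic_identity
    (h : (Fin 2 → ℝ) → ℝ) (u : (Fin 2 → ℝ) → (Fin 2 → ℝ))
    (hh : ContDiff ℝ (⊤ : ℕ∞) h) (hpos : ∀ x, 0 < h x) (hu : ContDiff ℝ (⊤ : ℕ∞) u)
    (x : Fin 2 → ℝ) (i : Fin 2) :
    (-1 / 3) * (divg u x / h x) * pdv i (fun y => (h y) ^ 3 * divg u y) x
      + (1 / h x) * pdv i (fun y =>
          (-1 / 3) * (h y) ^ 3 * (∑ j, u y j * pdv j (divg u) y)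
            + (h y) ^ 3 * (divg u y) ^ 2) x
      - (1 / 2) * pdv i (fun y => (h y * divg u y) ^ 2) x
      = (-1 / (3 * h x)) * pdv i (fun y =>
          (h y) ^ 3 * ((∑ j, u y j * pdv j (divg u) y) - (divg u y) ^ 2)) x := by
  open GNaux in
  -- smoothness of the divergence and of `S y = ∑ j, u y j * ∂ⱼ(div u) y`
  have hD : ContDiff ℝ (⊤ : ℕ∞) (divg u) := by
    unfold divg
    exact ContDiff.sum fun j _ => contDiff_pdv (contDiff_pi.mp hu j) j
  have hS : ContDiff ℝ (⊤ : ℕ∞) (fun y => ∑ j, u y j * pdv j (divg u) y) :=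
    ContDiff.sum fun j _ => (contDiff_pi.mp hu j).mul (contDiff_pdv hD j)
  -- differentiability at x of all pieces
  have dh : DifferentiableAt ℝ h x := hh.differentiable (by simp) x
  have dD : DifferentiableAt ℝ (divg u) x := hD.differentiable (by simp) x
  have dS : DifferentiableAt ℝ (fun y => ∑ j, u y j * pdv j (divg u) y) x :=
    hS.differentiable (by simp) x
  have dh3 : DifferentiableAt ℝ (fun y => (h y) ^ 3) x := dh.pow 3
  have dD2 : DifferentiableAt ℝ (fun y => (divg u y) ^ 2) x := dD.pow 2
  -- notation
  set a := h x with ha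
  set D0 := divg u x with hD0
  set S0 := (∑ j, u x j * pdv j (divg u) x) with hS0
  set a' := pdv i h x with ha'
  set D' := pdv i (divg u) x with hD'
  set S' := pdv i (fun y => ∑ j, u y j * pdv j (divg u) y) x with hS'
  -- compute each partial derivative
  have e1 : pdv i (fun y => (h y) ^ 3 * divg u y) x
      = (3 * a ^ 2 * a') * D0 + a ^ 3 * D' := by
    rw [pdv_mul dh3 dD, pdv_cube dh]
  have e2 : pdv i (fun y =>
        (-1 / 3) * (h y) ^ 3 * (∑ j, u y j * pdv j (divg u) y)
          + (h y) ^ 3 * (divg u y) ^ 2) x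
      = ((-1 / 3) * (3 * a ^ 2 * a') * S0 + (-1 / 3) * a ^ 3 * S')
          + ((3 * a ^ 2 * a') * D0 ^ 2 + a ^ 3 * (2 * D0 * D')) := by
    have d1 : DifferentiableAt ℝ (fun y => (-1 / 3 : ℝ) * (h y) ^ 3) x :=
      dh3.const_mul _
    rw [pdv_add (d1.fun_mul dS) (dh3.fun_mul dD2), pdv_mul d1 dS, pdv_mul dh3 dD2,
      pdv_const_mul dh3, pdv_cube dh, pdv_sq dD]
  have e3 : pdv i (fun y => (h y * divg u y) ^ 2) x
      = 2 * (a * D0) * (a' * D0 + a * D') := by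
    rw [pdv_sq (dh.fun_mul dD), pdv_mul dh dD]
  have e4 : pdv i (fun y =>
        (h y) ^ 3 * ((∑ j, u y j * pdv j (divg u) y) - (divg u y) ^ 2)) x
      = (3 * a ^ 2 * a') * (S0 - D0 ^ 2) + a ^ 3 * (S' - 2 * D0 * D') := by
    rw [pdv_mul dh3 (dS.fun_sub dD2), pdv_sub dS dD2, pdv_cube dh, pdv_sq dD]
  rw [e1, e2, e3, e4]
  have hane : a ≠ 0 := ne_of_gt (hpos x)
  field_simp
  ring
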